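/- Let M be a finite nonempty set of mobiles, N a finite nonempty set of base stations, p : M × N → ℝ a power cost matrix, and θ ∈ ℝ a clustering weight. In the hedonic mobile assignment game, the utility of mobile x at profile σ : M → N is u_x(σ) = θ · Σ_{y : σ(y)=σ(x), y ≠ x} min(p(x,σ(x)), p(y,σ(x))) − p(x,σ(x)). Then the function Φ(σ) = Σ_{j∈N} ( −Σ_{a : σ(a)=j} p(a,j) + (θ/2) Σ_{a : σ(a)=j} Σ_{b : σ(b)=j, b ≠ a} min(p(a,j), p(b,j)) ) is an exact potential: for every σ, every x ∈ M and every s ∈ N, Φ(σ[x↦s]) − Φ(σ) = u_x(σ[x↦s]) − u_x(σ); in particular this game admits a pure Nash equilibrium. -/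
import Mathlib


open Finset

/-- Utility of mobile `x` at profile `σ` in the hedonic mobile assignment game
with power cost matrix `p` and clustering weight `θ`. -/
noncomputable def hedonicUtility {M N : Type*} [Fintype M] [DecidableEq M]
    [DecidableEq N] (p : M → N → ℝ) (θ : ℝ) (σ : M → N) (x : M) : ℝ :=
  θ * ∑ y ∈ (univ.filter (fun y => σ y = σ x)).erase x,
        min (p x (σ x)) (p y (σ x))
    - p x (σ x)

/-- The potential function of the hedonic mobile assignment game. -/
noncomputable def hedonicPotential {M N : Type*} [Fintype M] [DecidableEq M]
    [Fintype N] [DecidableEq N] (p : M → N → ℝ) (θ : ℝ) (σ : M → N) : ℝ :=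
  ∑ j, (-(∑ a ∈ univ.filter (fun a => σ a = j), p a j)
    + (θ / 2) * ∑ a ∈ univ.filter (fun a => σ a = j),
        ∑ b ∈ (univ.filter (fun b => σ b = j)).erase a, min (p a j) (p b j))

section Aux

variable {M N : Type*} [Fintype M] [DecidableEq M] [Fintype N] [DecidableEq N]

/-- Clustering sum of a mobile. -/
noncomputable def hedSsum (p : M → N → ℝ) (σ : M → N) (x : M) : ℝ :=
  ∑ b ∈ (univ.filter (fun b => σ b = σ x)).erase x, min (p x (σ x)) (p b (σ x))

lemma hedUtil_eq (p : M → N → ℝ) (θ : ℝ) (σ : M → N) (x : M) :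
    hedonicUtility p θ σ x = θ * hedSsum p σ x - p x (σ x) := rfl

lemma hedPot_eq (p : M → N → ℝ) (θ : ℝ) (σ : M → N) :
    hedonicPotential p θ σ
      = ∑ a, (-(p a (σ a)) + (θ / 2) * hedSsum p σ a) := by
  unfold hedonicPotential
  rw [← Finset.sum_fiberwise univ σ (fun a => -(p a (σ a)) + (θ / 2) * hedSsum p σ a)]
  refine Finset.sum_congr rfl fun j _ => ?_
  rw [Finset.sum_add_distrib, Finset.sum_neg_distrib, Finset.mul_sum]
  congr 1
  · congr 1
    refine Finset.sum_congr rfl fun a ha => ?_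
    rw [(Finset.mem_filter.mp ha).2]
  · refine Finset.sum_congr rfl fun a ha => ?_
    have haj : σ a = j := (Finset.mem_filter.mp ha).2
    simp only [hedSsum, haj]

lemma hed_sum_split {α : Type*} [DecidableEq α] (s : Finset α) (x : α) (f : α → ℝ) :
    ∑ b ∈ s, f b = (∑ b ∈ s.erase x, f b) + if x ∈ s then f x else 0 := by
  by_cases h : x ∈ s
  · rw [if_pos h, Finset.sum_erase_add s f h]
  · rw [if_neg h, Finset.erase_eq_of_notMem h, add_zero]

lemma hedSsum_total (p : M → N → ℝ) (σ : M → N) (x : M) :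
    ∑ a, hedSsum p σ a
      = (∑ a ∈ univ.erase x,
          ∑ b ∈ ((univ.filter (fun b => σ b = σ a)).erase a).erase x,
            min (p a (σ a)) (p b (σ a)))
        + 2 * hedSsum p σ x := by
  rw [← Finset.sum_erase_add univ _ (mem_univ x)]
  have h1 : ∀ a ∈ univ.erase x, hedSsum p σ a
      = (∑ b ∈ ((univ.filter (fun b => σ b = σ a)).erase a).erase x,
          min (p a (σ a)) (p b (σ a)))
        + (if σ x = σ a then min (p a (σ a)) (p x (σ a)) else 0) := by
    intro a ha
    have hax : a ≠ x := (Finset.mem_erase.mp ha).1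
    rw [hedSsum, hed_sum_split _ x]
    congr 1
    simp [Finset.mem_erase, hax.symm]
  rw [Finset.sum_congr rfl h1, Finset.sum_add_distrib]
  have h2 : ∑ a ∈ univ.erase x,
      (if σ x = σ a then min (p a (σ a)) (p x (σ a)) else 0) = hedSsum p σ x := by
    rw [← Finset.sum_filter]
    have hset : (univ.erase x).filter (fun a => σ x = σ a)
        = (univ.filter (fun b => σ b = σ x)).erase x := by
      ext b
      simp only [Finset.mem_filter, Finset.mem_erase, Finset.mem_univ, true_and]
      tauto
    rw [hset]
    refine Finset.sum_congr rfl fun a ha => ?_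
    have h3 : σ a = σ x := (Finset.mem_filter.mp (Finset.mem_of_mem_erase ha)).2
    rw [h3, min_comm]
  rw [h2]; ring

lemma hedT_invariant (p : M → N → ℝ) (σ : M → N) (x : M) (s : N) :
    ∀ a ∈ univ.erase x,
      (∑ b ∈ ((univ.filter (fun b => Function.update σ x s b
            = Function.update σ x s a)).erase a).erase x,
        min (p a (Function.update σ x s a)) (p b (Function.update σ x s a)))
      = ∑ b ∈ ((univ.filter (fun b => σ b = σ a)).erase a).erase x,
          min (p a (σ a)) (p b (σ a)) := by
  intro a ha
  have hax : a ≠ x := (Finset.mem_erase.mp ha).1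
  have hsa : Function.update σ x s a = σ a := Function.update_of_ne hax s σ
  rw [hsa]
  apply Finset.sum_congr
  · ext b
    simp only [Finset.mem_erase, Finset.mem_filter, Finset.mem_univ, true_and]
    constructor
    · rintro ⟨h1, h2, h3⟩
      exact ⟨h1, h2, by rwa [Function.update_of_ne h1] at h3⟩
    · rintro ⟨h1, h2, h3⟩
      exact ⟨h1, h2, by rwa [Function.update_of_ne h1]⟩
  · intro b _; rfl

lemma hed_sum_diff_single (f g : M → ℝ) (x : M) (h : ∀ a, a ≠ x → f a = g a) :
    (∑ a, f a) - (∑ a, g a) = f x - g x := by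
  rw [← Finset.sum_erase_add univ f (mem_univ x), ← Finset.sum_erase_add univ g (mem_univ x),
      Finset.sum_congr rfl (fun a ha => h a (Finset.mem_erase.mp ha).1)]
  ring

lemma hed_exact (p : M → N → ℝ) (θ : ℝ) (σ : M → N) (x : M) (s : N) :
    hedonicPotential p θ (Function.update σ x s) - hedonicPotential p θ σ
      = hedonicUtility p θ (Function.update σ x s) x - hedonicUtility p θ σ x := by
  set σ' := Function.update σ x s with hσ'
  rw [hedPot_eq, hedPot_eq, hedUtil_eq, hedUtil_eq]
  rw [Finset.sum_add_distrib, Finset.sum_add_distrib, ← Finset.mul_sum, ← Finset.mul_sum]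
  rw [hedSsum_total p σ' x, hedSsum_total p σ x,
      Finset.sum_congr rfl (hedT_invariant p σ x s)]
  have hL : (∑ a, -(p a (σ' a))) - (∑ a, -(p a (σ a)))
      = -(p x (σ' x)) - -(p x (σ x)) := by
    refine hed_sum_diff_single _ _ x fun a hax => ?_
    rw [hσ', Function.update_of_ne hax]
  have hxs : σ' x = s := Function.update_self x s σ
  rw [hxs] at hL ⊢
  linear_combination hL

end Aux

/-- The hedonic mobile assignment game is an exact potential game, and in
particular admits a pure Nash equilibrium. -/
theorem hedonic_game_exact_potential {M N : Type*}
    [Fintype M] [DecidableEq M] [Nonempty M]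
    [Fintype N] [DecidableEq N] [Nonempty N]
    (p : M → N → ℝ) (θ : ℝ) :
    (∀ (σ : M → N) (x : M) (s : N),
      hedonicPotential p θ (Function.update σ x s) - hedonicPotential p θ σ
        = hedonicUtility p θ (Function.update σ x s) x
            - hedonicUtility p θ σ x) ∧
    (∃ σ : M → N, ∀ (x : M) (s : N),
      hedonicUtility p θ σ x
        ≥ hedonicUtility p θ (Function.update σ x s) x) := by
  refine ⟨fun σ x s => hed_exact p θ σ x s, ?_⟩
  obtain ⟨σ, -, hσ⟩ := Finset.exists_max_image (univ : Finset (M → N))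
    (hedonicPotential p θ) ⟨Classical.arbitrary _, mem_univ _⟩
  refine ⟨σ, fun x s => ?_⟩
  have h1 := hed_exact p θ σ x s
  have h2 := hσ (Function.update σ x s) (mem_univ _)
  linarith
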